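/- arXiv:1710.10394 — 5 statements merged into one kernel-verified Lean document; each statement's English description precedes it below -/
import Mathlib

section
/- Let G_h, G_l, F_l, F_h be Laurent polynomials over ℝ satisfying the two-channel perfect reconstruction condition F_l(z)G_l(z) + F_h(z)G_h(z) = 2z^{-n₀} and F_l(z)G_l(−z) + F_h(z)G_h(−z) = 0. For any Laurent polynomial T, define G_h'(z) = G_h(z) − G_l(z)T(z²) and F_l'(z) = F_l(z) + F_h(z)T(z²). Then G_l, G_h', F_l', F_h again satisfy the perfect reconstruction condition with the same delay n₀. -/
/-- Evaluation of the FIR (Laurent polynomial) transfer function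
`H(z) = Σ_k h[k] z^{-k}` at a nonzero complex `z`. -/
noncomputable def lev (h : ℤ → ℝ) (z : ℂ) : ℂ := ∑ᶠ k : ℤ, (h k : ℂ) * z ^ (-k)

/-! The lifting step adds `F_h T(z²) G_l(±z)` to the first product and subtracts
`F_h G_l(±z) T((±z)²)` from the second; since `T(z²)` is even in `z`, these cancel in both
the distortion and the aliasing term. -/

theorem lifting_sum_mul_invariant {R : Type*} [CommRing R] (f₁ f₂ g₁ g₂ τ : R) :
    (f₁ + f₂ * τ) * g₁ + f₂ * (g₂ - g₁ * τ) = f₁ * g₁ + f₂ * g₂ := by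
  ring

theorem predict_lifting_preserves_PR_general
    (gl gh fl fh t : ℤ → ℝ)
    (n₀ : ℤ)
    (hPR : ∀ z : ℂ, z ≠ 0 → lev fl z * lev gl z + lev fh z * lev gh z = 2 * z ^ (-n₀))
    (hAlias : ∀ z : ℂ, z ≠ 0 → lev fl z * lev gl (-z) + lev fh z * lev gh (-z) = 0) :
    (∀ z : ℂ, z ≠ 0 →
      (lev fl z + lev fh z * lev t (z ^ 2)) * lev gl z
        + lev fh z * (lev gh z - lev gl z * lev t (z ^ 2)) = 2 * z ^ (-n₀))
    ∧ (∀ z : ℂ, z ≠ 0 →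
      (lev fl z + lev fh z * lev t (z ^ 2)) * lev gl (-z)
        + lev fh z * (lev gh (-z) - lev gl (-z) * lev t ((-z) ^ 2)) = 0) := by
  refine ⟨fun z hz => ?_, fun z hz => ?_⟩
  · rw [lifting_sum_mul_invariant, hPR z hz]
  · rw [neg_sq, lifting_sum_mul_invariant, hAlias z hz]

/-- Predict lifting step preserves perfect reconstruction: if the two-channel
filterbank `(G_l, G_h, F_l, F_h)` satisfies the no-distortion condition
`F_l G_l + F_h G_h = 2 z^{-n₀}` and the no-aliasing condition
`F_l(z) G_l(−z) + F_h(z) G_h(−z) = 0`, then for any predict filter `T`, the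
lifted filters `G_h'(z) = G_h(z) − G_l(z) T(z²)` and
`F_l'(z) = F_l(z) + F_h(z) T(z²)` together with `G_l, F_h` again satisfy both
conditions with the same delay `n₀`. -/
theorem predict_lifting_preserves_PR
    (gl gh fl fh t : ℤ → ℝ)
    (hgl : (Function.support gl).Finite) (hgh : (Function.support gh).Finite)
    (hfl : (Function.support fl).Finite) (hfh : (Function.support fh).Finite)
    (ht : (Function.support t).Finite) (n₀ : ℤ)
    (hPR : ∀ z : ℂ, z ≠ 0 → lev fl z * lev gl z + lev fh z * lev gh z = 2 * z ^ (-n₀))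
    (hAlias : ∀ z : ℂ, z ≠ 0 → lev fl z * lev gl (-z) + lev fh z * lev gh (-z) = 0) :
    (∀ z : ℂ, z ≠ 0 →
      (lev fl z + lev fh z * lev t (z ^ 2)) * lev gl z
        + lev fh z * (lev gh z - lev gl z * lev t (z ^ 2)) = 2 * z ^ (-n₀))
    ∧ (∀ z : ℂ, z ≠ 0 →
      (lev fl z + lev fh z * lev t (z ^ 2)) * lev gl (-z)
        + lev fh z * (lev gh (-z) - lev gl (-z) * lev t ((-z) ^ 2)) = 0) :=
  predict_lifting_preserves_PR_general gl gh fl fh t n₀ hPR hAlias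
end

section
/- Let G_h, G_l, F_l, F_h be Laurent polynomials satisfying the two-channel perfect reconstruction condition (F_l G_l + F_h G_h)(z) = 2z^{-n₀} and (F_l(z)G_l(−z) + F_h(z)G_h(−z)) = 0. For any Laurent polynomial S, define G_l'(z) = G_l(z) + G_h(z)S(z²) and F_h'(z) = F_h(z) − F_l(z)S(z²). Then G_l', G_h, F_l, F_h' again satisfy the perfect reconstruction condition with the same delay n₀. -/
theorem update_lifting_sum_eq {R : Type*} [CommRing R] (fl gl fh gh s : R) :
    fl * (gl + gh * s) + (fh - fl * s) * gh = fl * gl + fh * gh := by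
  ring

theorem update_lifting_preserves_PR_general
    (gl gh fl fh s : ℤ → ℝ)
    (n₀ : ℤ)
    (hPR : ∀ z : ℂ, z ≠ 0 → lev fl z * lev gl z + lev fh z * lev gh z = 2 * z ^ (-n₀))
    (hAlias : ∀ z : ℂ, z ≠ 0 → lev fl z * lev gl (-z) + lev fh z * lev gh (-z) = 0) :
    (∀ z : ℂ, z ≠ 0 →
      lev fl z * (lev gl z + lev gh z * lev s (z ^ 2))
        + (lev fh z - lev fl z * lev s (z ^ 2)) * lev gh z = 2 * z ^ (-n₀))
    ∧ (∀ z : ℂ, z ≠ 0 →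
      lev fl z * (lev gl (-z) + lev gh (-z) * lev s ((-z) ^ 2))
        + (lev fh z - lev fl z * lev s (z ^ 2)) * lev gh (-z) = 0) := by
  constructor
  · intro z hz
    rw [update_lifting_sum_eq]
    exact hPR z hz
  · intro z hz
    -- the update filter sees `z²` in both channels, so the aliased cross terms cancel too
    rw [neg_sq, update_lifting_sum_eq]
    exact hAlias z hz

/-- Update lifting step preserves perfect reconstruction: if the two-channel
filterbank `(G_l, G_h, F_l, F_h)` satisfies `F_l G_l + F_h G_h = 2 z^{-n₀}` and
`F_l(z) G_l(−z) + F_h(z) G_h(−z) = 0`, then for any update filter `S`, the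
lifted filters `G_l'(z) = G_l(z) + G_h(z) S(z²)` and
`F_h'(z) = F_h(z) − F_l(z) S(z²)` together with `G_h, F_l` again satisfy both
conditions with the same delay `n₀`. -/
theorem update_lifting_preserves_PR
    (gl gh fl fh s : ℤ → ℝ)
    (hgl : (Function.support gl).Finite) (hgh : (Function.support gh).Finite)
    (hfl : (Function.support fl).Finite) (hfh : (Function.support fh).Finite)
    (hs : (Function.support s).Finite) (n₀ : ℤ)
    (hPR : ∀ z : ℂ, z ≠ 0 → lev fl z * lev gl z + lev fh z * lev gh z = 2 * z ^ (-n₀))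
    (hAlias : ∀ z : ℂ, z ≠ 0 → lev fl z * lev gl (-z) + lev fh z * lev gh (-z) = 0) :
    (∀ z : ℂ, z ≠ 0 →
      lev fl z * (lev gl z + lev gh z * lev s (z ^ 2))
        + (lev fh z - lev fl z * lev s (z ^ 2)) * lev gh z = 2 * z ^ (-n₀))
    ∧ (∀ z : ℂ, z ≠ 0 →
      lev fl z * (lev gl (-z) + lev gh (-z) * lev s ((-z) ^ 2))
        + (lev fh z - lev fl z * lev s (z ^ 2)) * lev gh (-z) = 0) :=
  update_lifting_preserves_PR_general gl gh fl fh s n₀ hPR hAlias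
end

section
/- (Theorem 1, predict locality) Let q1, q2 ≥ 1, M = q1+q2, and let a, d be the rational Lazy wavelet branches of a signal x, with k-th blocks a^k[m] = x[(k−1)M + m] for 0 ≤ m ≤ q1−1 and d^k[m] = x[(k−1)M + q1 + m] for 0 ≤ m ≤ q2−1. The prediction a4 produced by the 2-tap filter T(z) = z^{q1 q2}(t[0] z^{-q2} + t[1]) applied after the predict rate converter satisfies, for 0 ≤ m ≤ q2−1, a4^k[m] = t[0]·a[k q1 − 1 + ⌊q1 m / q2⌋] + t[1]·a[k q1 + ⌊q1 m / q2⌋]; consequently every sample of the k-th block of d is predicted only from samples of the k-th and (k+1)-th blocks of a. -/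
/-- `M`-fold upsampler: `(↑M x)[M n] = x[n]`, zero at indices not divisible by `M`. -/
noncomputable def upSample (M : ℕ) (x : ℤ → ℝ) : ℤ → ℝ :=
  fun n => if (M : ℤ) ∣ n then x (n / M) else 0

/-- `M`-fold downsampler: `(↓M x)[n] = x[M n]`. -/
def downSample (M : ℕ) (x : ℤ → ℝ) : ℤ → ℝ := fun n => x ((M : ℤ) * n)

/-- Filtering: discrete convolution with impulse response `h`. -/
noncomputable def conv (h x : ℤ → ℝ) : ℤ → ℝ := fun n => ∑ᶠ k : ℤ, h k * x (n - k)

/-- Impulse response of `R(z) = 1 + z^{-1} + … + z^{-(q−1)}`. -/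
def boxFilter (q : ℕ) : ℤ → ℝ := fun j => if 0 ≤ j ∧ j < (q : ℤ) then 1 else 0

/-!
Upsampling by `q2` followed by the box filter `R_p` is sample-and-hold: it sends `a` to
`n ↦ a ⌊n / q2⌋`. Both taps of `T` shift by multiples of `q2`, so after downsampling by `q1`
at the index `(k − 1) q2 + m` the shifts come out of the floor as `k q1 − 1` and `k q1`, leaving
`⌊q1 m / q2⌋ ∈ [0, q1)`.
-/

lemma conv_two_tap_apply {j₀ j₁ : ℤ} (hne : j₀ ≠ j₁) (t₀ t₁ : ℝ) (x : ℤ → ℝ) (n : ℤ) :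
    conv (fun j => if j = j₀ then t₀ else if j = j₁ then t₁ else 0) x n
      = t₀ * x (n - j₀) + t₁ * x (n - j₁) := by
  have hsupp : (Function.support fun j : ℤ =>
      (if j = j₀ then t₀ else if j = j₁ then t₁ else 0) * x (n - j)) ⊆ ({j₀, j₁} : Finset ℤ) := by
    intro j hj
    by_contra hmem
    simp only [Finset.coe_pair, Set.mem_insert_iff, Set.mem_singleton_iff, not_or] at hmem
    simp [hmem.1, hmem.2] at hj
  rw [conv, finsum_eq_sum_of_support_subset _ hsupp, Finset.sum_pair hne]
  simp [hne.symm]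

lemma dvd_sub_iff_eq_emod {q j : ℤ} (n : ℤ) (hj₀ : 0 ≤ j) (hjq : j < q) :
    q ∣ n - j ↔ j = n % q := by
  rw [← Int.modEq_iff_dvd, Int.ModEq, Int.emod_eq_of_lt hj₀ hjq]

lemma conv_boxFilter_upSample {q : ℕ} (hq : q ≠ 0) (a : ℤ → ℝ) (n : ℤ) :
    conv (boxFilter q) (upSample q a) n = a (n / q) := by
  have hq' : (0 : ℤ) < q := by omega
  have hsupp : (Function.support fun j : ℤ => boxFilter q j * upSample q a (n - j))
      ⊆ Finset.Ico (0 : ℤ) q := by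
    intro j hj
    by_contra hmem
    simp only [Finset.coe_Ico, Set.mem_Ico] at hmem
    simp [boxFilter, hmem] at hj
  have hr₀ : 0 ≤ n % q := Int.emod_nonneg n hq'.ne'
  have hrq : n % q < q := Int.emod_lt_of_pos n hq'
  rw [conv, finsum_eq_sum_of_support_subset _ hsupp,
    Finset.sum_eq_single_of_mem (n % q) (Finset.mem_Ico.2 ⟨hr₀, hrq⟩)]
  · have hsub : n - n % q = q * (n / q) := by rw [Int.emod_def]; ring
    simp [boxFilter, upSample, hr₀, hrq, hsub, Int.mul_ediv_cancel_left _ hq'.ne']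
  · intro j hj hjr
    obtain ⟨hj₀, hjq⟩ := Finset.mem_Ico.1 hj
    simp [upSample, dvd_sub_iff_eq_emod n hj₀ hjq, hjr]

/-- Theorem 1 (predict locality): with the 2-tap predict filter
`T(z) = z^{q1 q2}(t[0] z^{-q2} + t[1])` applied after the predict rate
converter, the prediction `a4` satisfies, for `0 ≤ m ≤ q2 − 1`,
`a4^k[m] = t[0]·a[k q1 − 1 + ⌊q1 m / q2⌋] + t[1]·a[k q1 + ⌊q1 m / q2⌋]`;
consequently every sample of the `k`-th block of `d` is predicted only from
samples of the `k`-th and `(k+1)`-th blocks of `a` (the predicting indices lie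
in `[(k−1)q1, (k+1)q1 − 1]`). -/
theorem predict_two_tap_locality (q1 q2 : ℕ) (h1 : 1 ≤ q1) (h2 : 1 ≤ q2)
    (t0 t1 : ℝ) (a : ℤ → ℝ) :
    let T : ℤ → ℝ := fun j =>
      if j = (q2 : ℤ) - (q1 : ℤ) * q2 then t0
      else if j = -((q1 : ℤ) * q2) then t1 else 0
    let a4 : ℤ → ℝ := downSample q1 (conv T (conv (boxFilter q2) (upSample q2 a)))
    ∀ k m : ℤ, 0 ≤ m → m < (q2 : ℤ) →
      (a4 ((k - 1) * q2 + m)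
          = t0 * a (k * q1 - 1 + Int.fdiv ((q1 : ℤ) * m) q2)
            + t1 * a (k * q1 + Int.fdiv ((q1 : ℤ) * m) q2))
      ∧ (k - 1) * q1 ≤ k * q1 - 1 + Int.fdiv ((q1 : ℤ) * m) q2
      ∧ k * q1 + Int.fdiv ((q1 : ℤ) * m) q2 ≤ (k + 1) * q1 - 1 := by
  intro T a4 k m hm₀ hmq
  have hq2 : (0 : ℤ) < q2 := by omega
  have hfdiv : Int.fdiv ((q1 : ℤ) * m) q2 = (q1 : ℤ) * m / q2 :=
    Int.fdiv_eq_ediv_of_nonneg _ hq2.le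
  have hdiv₀ : 0 ≤ (q1 : ℤ) * m / q2 := Int.ediv_nonneg (by positivity) hq2.le
  have hdivq : (q1 : ℤ) * m / q2 < q1 := by
    rw [Int.ediv_lt_iff_lt_mul hq2]
    exact mul_lt_mul_of_pos_left hmq (by omega)
  refine ⟨?_, by rw [hfdiv]; linarith, by rw [hfdiv]; linarith⟩
  have hshift (c : ℤ) : ((q1 : ℤ) * m + c * q2) / q2 = c + (q1 : ℤ) * m / q2 := by
    rw [Int.add_mul_ediv_right _ _ hq2.ne', add_comm]
  have htaps : (q2 : ℤ) - q1 * q2 ≠ -(q1 * q2) := by omega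
  show conv T (conv (boxFilter q2) (upSample q2 a)) (q1 * ((k - 1) * q2 + m)) = _
  rw [conv_two_tap_apply htaps, conv_boxFilter_upSample (by omega),
    conv_boxFilter_upSample (by omega), hfdiv, ← hshift, ← hshift]
  ring_nf
end

section
/- (Theorem 2 structure) Let q1, q2 ≥ 1, M = q1+q2 with gcd(M, q2) = 1. In a 2-channel rational filterbank with lowpass branch (filter G_l, q1-fold upsampler after filtering through M-fold downsampling) and highpass branch (filter G_h, M-fold downsampler, q2-fold upsampler), performing the lifting predict step with composite predict filter P(z) = R_p(z)T(z) is equivalent to replacing G_h by G_h^{new}(z) = G_h(z) − (1/q1) Σ_{k=0}^{q1−1} G_l(z^{q2/q1} W_{q1}^{q2 k}) P(z^{M/q1} W_{q1}^{M k}), where W_{q1} = exp(−2πi/q1); that is, both systems produce identical lower-branch outputs for every input. -/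
/-!
Push the predict branch through the multirate identities: `↑q2` commutes with `↓M` because
`gcd(M, q2) = 1`, the filter `p` after `↓M` moves in front of it as `↑M p`, and
`↓q1 (D * ↑q1 y) = (↓q1 D) * y`. The branch becomes `↓M (c * ↑q2 x)` for the single filter
`c = ↓q1 (↑M p * ↑q2 g_l)`. On the transfer-function side, `↑q1 ↓q1` averages over the `q1`-th
roots of unity, so `C(w^q1)` is exactly the alias sum in the formula. Hence the hypothesis says
`G_h^new = G_h - C` as Laurent polynomials, i.e. `g_h^new = g_h - c`, and linearity of
convolution finishes the proof.
-/

open Function Set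

theorem finsum_comm_of_finite_support {α β M : Type*} [AddCommMonoid M] {f : α → β → M}
    (hf : (support (uncurry f)).Finite) :
    ∑ᶠ (a) (b), f a b = ∑ᶠ (b) (a), f a b := by
  have hswap : (support fun p : β × α => f p.2 p.1).Finite :=
    (hf.image Prod.swap).subset fun p hp => ⟨p.swap, hp, rfl⟩
  calc ∑ᶠ (a) (b), f a b = ∑ᶠ p : α × β, uncurry f p := (finsum_curry _ hf).symm
    _ = ∑ᶠ p : β × α, f p.2 p.1 := (finsum_comp_equiv (Equiv.prodComm β α)).symm
    _ = ∑ᶠ (b) (a), f a b := finsum_curry _ hswap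

lemma finite_support_conv_summand {R : Type*} [MulZeroClass R] {f g : ℤ → R}
    (hf : (support f).Finite) (hg : (support g).Finite) (y : ℤ → R) :
    (support fun p : ℤ × ℤ => f p.2 * g (p.1 - p.2) * y p.1).Finite := by
  refine ((hf.prod hg).image fun q => (q.1 + q.2, q.1)).subset fun p hp => ?_
  have hfp : f p.2 ≠ 0 := fun h0 => hp (by simp [h0])
  have hgp : g (p.1 - p.2) ≠ 0 := fun h0 => hp (by simp [h0])
  exact ⟨(p.2, p.1 - p.2), ⟨hfp, hgp⟩, by simp⟩

lemma Complex.ofReal_finsum {α : Type*} (f : α → ℝ) :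
    ((∑ᶠ a, f a : ℝ) : ℂ) = ∑ᶠ a, (f a : ℂ) :=
  Complex.ofRealHom.toAddMonoidHom.map_finsum_of_injective Complex.ofReal_injective f

lemma IsPrimitiveRoot.sum_zpow_pow_eq_ite {K : Type*} [Field K] {ζ : K} {q : ℕ}
    (hζ : IsPrimitiveRoot ζ q) (m : ℤ) :
    ∑ j ∈ Finset.range q, (ζ ^ m) ^ j = if (q : ℤ) ∣ m then (q : K) else 0 := by
  split_ifs with hm
  · simp [(hζ.zpow_eq_one_iff_dvd m).mpr hm]
  · have hne : ζ ^ m - 1 ≠ 0 := sub_ne_zero.mpr fun h => hm ((hζ.zpow_eq_one_iff_dvd m).mp h)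
    refine (mul_eq_zero.mp ?_).resolve_right hne
    rw [geom_sum_mul, ← zpow_natCast, ← zpow_mul, mul_comm, zpow_mul, zpow_natCast,
      hζ.pow_eq_one, one_zpow, sub_self]

section Multirate

variable {f g : ℤ → ℝ} {r : ℕ}

lemma upSample_mul_apply (hr : r ≠ 0) (x : ℤ → ℝ) (k : ℤ) :
    upSample r x (r * k) = x k := by
  rw [upSample, if_pos (dvd_mul_right _ _), Int.mul_ediv_cancel_left _ (by exact_mod_cast hr)]

lemma upSample_of_not_dvd (x : ℤ → ℝ) {n : ℤ} (hn : ¬ (r : ℤ) ∣ n) : upSample r x n = 0 :=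
  if_neg hn

lemma finsum_upSample {α : Type*} [AddCommMonoid α] (hr : r ≠ 0) (x : ℤ → ℝ)
    (F : ℤ → ℝ → α) (hF : ∀ j, F j 0 = 0) :
    ∑ᶠ j, F j (upSample r x j) = ∑ᶠ k, F (r * k) (x k) := by
  have hinj : Injective fun k : ℤ => (r : ℤ) * k := mul_right_injective₀ (by exact_mod_cast hr)
  rw [← finsum_mem_univ, finsum_mem_inter_support_eq' _ _ (range fun k : ℤ => (r : ℤ) * k),
    finsum_mem_range hinj]
  · simp only [upSample_mul_apply hr]
  · intro j hj
    simp only [mem_univ, true_iff]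
    by_contra hn
    exact hj (show F j (upSample r x j) = 0 by
      rw [upSample_of_not_dvd x fun ⟨k, hk⟩ => hn ⟨k, hk.symm⟩, hF])

lemma upSample_downSample_self (r : ℕ) (x : ℤ → ℝ) :
    upSample r (downSample r x) = fun n => if (r : ℤ) ∣ n then x n else 0 := by
  ext n
  simp only [upSample, downSample]
  split_ifs with hn
  · rw [Int.mul_ediv_cancel' hn]
  · rfl

lemma upSample_upSample (hr : r ≠ 0) (s : ℕ) (x : ℤ → ℝ) :
    upSample r (upSample s x) = upSample (r * s) x := by
  have hr' : (0 : ℤ) < r := by omega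
  ext n
  by_cases hn : (r : ℤ) ∣ n
  · obtain ⟨m, rfl⟩ := hn
    simp only [upSample, Nat.cast_mul, mul_dvd_mul_iff_left hr'.ne', dvd_mul_right, if_true,
      Int.mul_ediv_cancel_left _ hr'.ne', Int.mul_ediv_mul_of_pos _ _ hr']
  · rw [upSample_of_not_dvd _ hn, upSample_of_not_dvd]
    push_cast
    exact fun hd => hn (dvd_trans (dvd_mul_right _ _) hd)

lemma downSample_comm (r s : ℕ) (x : ℤ → ℝ) :
    downSample r (downSample s x) = downSample s (downSample r x) := by
  ext n
  simp only [downSample, mul_left_comm]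

lemma upSample_downSample_comm {M q : ℕ} (hcop : Nat.Coprime M q) (x : ℤ → ℝ) :
    upSample q (downSample M x) = downSample M (upSample q x) := by
  ext n
  have hdvd : (q : ℤ) ∣ M * n ↔ (q : ℤ) ∣ n :=
    ⟨(Nat.isCoprime_iff_coprime.mpr hcop.symm).dvd_of_dvd_mul_left, (dvd_mul_of_dvd_right · _)⟩
  simp only [upSample, downSample, hdvd]
  split_ifs with hn
  · rw [Int.mul_ediv_assoc _ hn]
  · rfl

lemma finite_support_upSample (r : ℕ) (hf : (support f).Finite) :
    (support (upSample r f)).Finite := by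
  refine (hf.image fun k => (r : ℤ) * k).subset fun n hn => ?_
  by_cases hd : (r : ℤ) ∣ n
  · exact ⟨n / r, by simpa [upSample, hd] using hn, Int.mul_ediv_cancel' hd⟩
  · exact absurd (upSample_of_not_dvd f hd) hn

lemma finite_support_downSample (hr : r ≠ 0) (hf : (support f).Finite) :
    (support (downSample r f)).Finite :=
  hf.preimage (mul_right_injective₀ (by exact_mod_cast hr : (r : ℤ) ≠ 0)).injOn

lemma finite_support_conv (hf : (support f).Finite) (hg : (support g).Finite) :
    (support (conv f g)).Finite := by
  refine (hf.image2 (· + ·) hg).subset fun n hn => ?_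
  by_contra hnot
  refine hn (finsum_eq_zero_of_forall_eq_zero fun k => ?_)
  by_contra hk
  exact hnot ⟨k, left_ne_zero_of_mul hk, n - k, right_ne_zero_of_mul hk, add_sub_cancel k n⟩

lemma conv_comm (f g : ℤ → ℝ) : conv f g = conv g f := by
  ext n
  rw [conv, ← finsum_comp_equiv (Equiv.subLeft n)]
  simp [conv, mul_comm]

lemma conv_assoc (hf : (support f).Finite) (hg : (support g).Finite) (x : ℤ → ℝ) :
    conv (conv f g) x = conv f (conv g x) := by
  ext n
  calc conv (conv f g) x n = ∑ᶠ (a) (k), f k * g (a - k) * x (n - a) := by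
        simp only [conv, finsum_mul]
    _ = ∑ᶠ (k) (a), f k * g (a - k) * x (n - a) :=
        finsum_comm_of_finite_support (finite_support_conv_summand hf hg fun a => x (n - a))
    _ = conv f (conv g x) n := by
        simp only [conv, mul_finsum]
        refine finsum_congr fun k => ?_
        rw [← finsum_comp_equiv (Equiv.addLeft k)]
        simp [mul_assoc, sub_sub]

lemma sub_conv (hf : (support f).Finite) (hg : (support g).Finite) (x : ℤ → ℝ) :
    conv (f - g) x = conv f x - conv g x := by
  ext n
  have hfin : ∀ {f : ℤ → ℝ}, (support f).Finite → (support fun k => f k * x (n - k)).Finite :=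
    fun hf => hf.subset (support_mul_subset_left _ _)
  simp only [conv, Pi.sub_apply, sub_mul]
  exact finsum_sub_distrib (hfin hf) (hfin hg)

lemma upSample_conv (hr : r ≠ 0) (h x : ℤ → ℝ) :
    upSample r (conv h x) = conv (upSample r h) (upSample r x) := by
  ext n
  rw [conv, finsum_upSample hr h (fun j v => v * upSample r x (n - j)) (fun _ => zero_mul _)]
  by_cases hn : (r : ℤ) ∣ n
  · obtain ⟨m, rfl⟩ := hn
    simp only [upSample_mul_apply hr, ← mul_sub, conv]
  · rw [upSample_of_not_dvd _ hn, eq_comm]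
    refine finsum_eq_zero_of_forall_eq_zero fun k => ?_
    rw [upSample_of_not_dvd x fun hd => hn (by simpa using dvd_add hd (dvd_mul_right _ k)),
      mul_zero]

lemma downSample_conv_upSample_left (hr : r ≠ 0) (h y : ℤ → ℝ) :
    downSample r (conv (upSample r h) y) = conv h (downSample r y) := by
  ext n
  rw [downSample, conv, finsum_upSample hr h (fun j v => v * y (r * n - j)) (fun _ => zero_mul _)]
  simp only [conv, downSample, mul_sub]

lemma downSample_conv_upSample_right (hr : r ≠ 0) (h y : ℤ → ℝ) :
    downSample r (conv h (upSample r y)) = conv (downSample r h) y := by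
  rw [conv_comm, downSample_conv_upSample_left hr, conv_comm]

end Multirate

section TransferFunction

variable {f g h : ℤ → ℝ}

lemma lev_upSample {r : ℕ} (hr : r ≠ 0) (h : ℤ → ℝ) (z : ℂ) :
    lev (upSample r h) z = lev h (z ^ r) := by
  rw [lev, finsum_upSample hr h (fun j v => (v : ℂ) * z ^ (-j)) (by simp), lev]
  simp only [← zpow_natCast, ← zpow_mul, mul_neg]

lemma lev_sub (hf : (support f).Finite) (hg : (support g).Finite) (z : ℂ) :
    lev (f - g) z = lev f z - lev g z := by
  have hfin : ∀ {f : ℤ → ℝ}, (support f).Finite → (support fun k => (f k : ℂ) * z ^ (-k)).Finite :=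
    fun hf => hf.subset fun k hk => by simpa using left_ne_zero_of_mul hk
  simp only [lev, Pi.sub_apply, Complex.ofReal_sub, sub_mul]
  exact finsum_sub_distrib (hfin hf) (hfin hg)

lemma lev_conv (hf : (support f).Finite) (hg : (support g).Finite) {z : ℂ} (hz : z ≠ 0) :
    lev (conv f g) z = lev f z * lev g z := by
  have hf' : (support fun k => (f k : ℂ)).Finite := hf.subset fun k hk => by simpa using hk
  have hg' : (support fun k => (g k : ℂ)).Finite := hg.subset fun k hk => by simpa using hk
  calc lev (conv f g) z = ∑ᶠ (n) (k), (f k : ℂ) * g (n - k) * z ^ (-n) := by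
        simp only [lev, conv, Complex.ofReal_finsum, Complex.ofReal_mul, finsum_mul]
    _ = ∑ᶠ (k) (n), (f k : ℂ) * g (n - k) * z ^ (-n) :=
        finsum_comm_of_finite_support (finite_support_conv_summand hf' hg' fun n => z ^ (-n))
    _ = lev f z * lev g z := by
        rw [lev, lev, finsum_mul]
        refine finsum_congr fun k => ?_
        rw [mul_finsum, ← finsum_comp_equiv (Equiv.addLeft k)]
        refine finsum_congr fun b => ?_
        simp only [Equiv.coe_addLeft, add_sub_cancel_left, neg_add, zpow_add₀ hz]
        ring

lemma lev_upSample_downSample {q : ℕ} (hq : q ≠ 0) {ζ : ℂ} (hζ : IsPrimitiveRoot ζ q)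
    (hh : (support h).Finite) (w : ℂ) :
    lev (upSample q (downSample q h)) w =
      (1 / (q : ℂ)) * ∑ j ∈ Finset.range q, lev h (w * ζ ^ j) := by
  have hfin : ∀ j ∈ Finset.range q,
      (support fun m => (h m : ℂ) * w ^ (-m) * (ζ ^ (-m)) ^ j).Finite :=
    fun j _ => hh.subset fun m hm => by simpa using left_ne_zero_of_mul (left_ne_zero_of_mul hm)
  symm
  calc (1 / (q : ℂ)) * ∑ j ∈ Finset.range q, lev h (w * ζ ^ j)
      = (1 / (q : ℂ)) * ∑ᶠ m, ∑ j ∈ Finset.range q, (h m : ℂ) * w ^ (-m) * (ζ ^ (-m)) ^ j := by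
        rw [finsum_sum_comm _ _ hfin]
        refine congrArg _ (Finset.sum_congr rfl fun j _ => finsum_congr fun m => ?_)
        rw [mul_assoc, mul_zpow, ← zpow_natCast ζ j, ← zpow_natCast (ζ ^ (-m)) j, ← zpow_mul,
          ← zpow_mul, mul_comm (-m)]
    _ = ∑ᶠ m, ((if (q : ℤ) ∣ m then h m else 0 : ℝ) : ℂ) * w ^ (-m) := by
        rw [mul_finsum]
        refine finsum_congr fun m => ?_
        rw [← Finset.mul_sum, hζ.sum_zpow_pow_eq_ite]
        simp only [dvd_neg]
        split_ifs
        · field_simp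
        · simp
    _ = lev (upSample q (downSample q h)) w := by
        rw [upSample_downSample_self, lev]

lemma eq_zero_of_lev_eq_zero (hh : (support h).Finite) (hlev : ∀ z : ℂ, z ≠ 0 → lev h z = 0) :
    h = 0 := by
  classical
  set s := hh.toFinset
  obtain ⟨N, hN⟩ := s.bddAbove
  have hN' : ∀ k ∈ s, 0 ≤ N - k := fun k hk => sub_nonneg.mpr (hN hk)
  -- `Q(z) = z ^ N * lev h z` is a polynomial vanishing on `ℂ \ {0}`, and its coefficients are `h`.
  set Q : Polynomial ℂ := ∑ k ∈ s, Polynomial.monomial (N - k).toNat (h k : ℂ)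
  have hcoeff : ∀ k ∈ s, Q.coeff (N - k).toNat = h k := by
    intro k hk
    rw [Polynomial.finsetSum_coeff, Finset.sum_eq_single k]
    · simp
    · intro j hj hjk
      rw [Polynomial.coeff_monomial, if_neg]
      have := hN' j hj
      have := hN' k hk
      omega
    · exact absurd hk
  have heval : ∀ z : ℂ, z ≠ 0 → Q.eval z = z ^ N * lev h z := by
    intro z hz
    rw [lev, finsum_eq_sum_of_support_subset _ (s := s) fun k hk => by
      simpa [s] using left_ne_zero_of_mul hk, Finset.mul_sum, Polynomial.eval_finsetSum]
    refine Finset.sum_congr rfl fun k hk => ?_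
    rw [Polynomial.eval_monomial, ← zpow_natCast, Int.toNat_of_nonneg (hN' k hk),
      sub_eq_add_neg, zpow_add₀ hz]
    ring
  have hQ : Q = 0 := Polynomial.eq_zero_of_infinite_isRoot Q <|
    (Set.finite_singleton 0).infinite_compl.mono fun z hz => by
      simp [heval z hz, hlev z hz]
  ext k
  by_contra hk
  have hks : k ∈ s := by simpa [s] using hk
  exact hk (by simpa [hQ] using (hcoeff k hks).symm)

lemma eq_of_lev_eq (hf : (support f).Finite) (hg : (support g).Finite)
    (hlev : ∀ z : ℂ, z ≠ 0 → lev f z = lev g z) : f = g :=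
  sub_eq_zero.mp <| eq_zero_of_lev_eq_zero ((hf.union hg).subset (support_sub f g))
    fun z hz => by rw [lev_sub hf hg, hlev z hz, sub_self]

end TransferFunction

/-- The impulse response of `G_h - G_h^{new}` in the paper's notation. -/
noncomputable def predictCorrection (q1 q2 M : ℕ) (gl p : ℤ → ℝ) : ℤ → ℝ :=
  downSample q1 (conv (upSample M p) (upSample q2 gl))

section PredictCorrection

variable {q1 q2 M : ℕ} {gl p : ℤ → ℝ}

lemma finite_support_predictCorrection (hq1 : q1 ≠ 0) (hgl : (support gl).Finite)
    (hp : (support p).Finite) : (support (predictCorrection q1 q2 M gl p)).Finite :=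
  finite_support_downSample hq1 <|
    finite_support_conv (finite_support_upSample M hp) (finite_support_upSample q2 hgl)

lemma predict_branch_eq_conv_predictCorrection (hq1 : q1 ≠ 0) (hq2 : q2 ≠ 0) (hM : M ≠ 0)
    (hcop : Nat.Coprime M q2) (hgl : (support gl).Finite) (hp : (support p).Finite)
    (x : ℤ → ℝ) :
    downSample q1 (conv p (upSample q2 (downSample M (conv gl (upSample q1 x))))) =
      downSample M (conv (predictCorrection q1 q2 M gl p) (upSample q2 x)) := by
  calc downSample q1 (conv p (upSample q2 (downSample M (conv gl (upSample q1 x)))))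
      = downSample q1 (downSample M (conv (upSample M p)
          (conv (upSample q2 gl) (upSample q1 (upSample q2 x))))) := by
        rw [upSample_downSample_comm hcop, ← downSample_conv_upSample_left hM, upSample_conv hq2,
          upSample_upSample hq2, mul_comm, ← upSample_upSample hq1]
    _ = downSample M (downSample q1 (conv (conv (upSample M p) (upSample q2 gl))
          (upSample q1 (upSample q2 x)))) := by
        rw [downSample_comm, conv_assoc (finite_support_upSample M hp)
          (finite_support_upSample q2 hgl)]
    _ = downSample M (conv (predictCorrection q1 q2 M gl p) (upSample q2 x)) := by
        rw [downSample_conv_upSample_right hq1, predictCorrection]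

lemma lev_predictCorrection (hq1 : q1 ≠ 0) (hq2 : q2 ≠ 0) (hM : M ≠ 0) {ζ : ℂ}
    (hζ : IsPrimitiveRoot ζ q1) (hgl : (support gl).Finite) (hp : (support p).Finite)
    {w : ℂ} (hw : w ≠ 0) :
    lev (predictCorrection q1 q2 M gl p) (w ^ q1) =
      (1 / (q1 : ℂ)) * ∑ k ∈ Finset.range q1,
        lev gl (w ^ q2 * ζ ^ (q2 * k)) * lev p (w ^ M * ζ ^ (M * k)) := by
  rw [predictCorrection, ← lev_upSample hq1, lev_upSample_downSample hq1 hζ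
    (finite_support_conv (finite_support_upSample M hp) (finite_support_upSample q2 hgl))]
  refine congrArg _ (Finset.sum_congr rfl fun k _ => ?_)
  rw [lev_conv (finite_support_upSample M hp) (finite_support_upSample q2 hgl)
      (mul_ne_zero hw (pow_ne_zero _ (hζ.ne_zero hq1))),
    lev_upSample hM, lev_upSample hq2, mul_comm, mul_pow, mul_pow, ← pow_mul, ← pow_mul,
    mul_comm k, mul_comm k]

end PredictCorrection

/-- Theorem 2: in a 2-channel rational filterbank (branches
`↑q1 → G_l → ↓M` and `↑q2 → G_h → ↓M`, `M = q1 + q2`, `gcd(M, q2) = 1`),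
the lifting predict step with composite predict filter `P(z) = R_p(z) T(z)`
(upper subband upsampled by `q2`, filtered by `P`, downsampled by `q1`, and
subtracted from the lower subband) is equivalent to replacing `G_h` by
`G_h^{new}(z) = G_h(z) − (1/q1) Σ_{k=0}^{q1−1} G_l(z^{q2/q1} W_{q1}^{q2 k}) P(z^{M/q1} W_{q1}^{M k})`
with `W_{q1} = exp(−2πi/q1)` (stated via the substitution `z = w^{q1}`):
both systems produce identical lower-branch outputs for every input. -/
theorem predict_step_equivalent_highpass (q1 q2 M : ℕ) (h1 : 1 ≤ q1) (h2 : 1 ≤ q2)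
    (hM : M = q1 + q2) (hcop : Nat.gcd M q2 = 1)
    (gl gh p ghnew : ℤ → ℝ)
    (hgl : (Function.support gl).Finite) (hgh : (Function.support gh).Finite)
    (hp : (Function.support p).Finite) (hghnew : (Function.support ghnew).Finite)
    (hformula : ∀ w : ℂ, w ≠ 0 →
      lev ghnew (w ^ q1) = lev gh (w ^ q1) -
        (1 / (q1 : ℂ)) * ∑ k ∈ Finset.range q1,
          lev gl (w ^ q2 * Complex.exp (-(2 * Real.pi * Complex.I) / q1) ^ (q2 * k)) *
            lev p (w ^ M * Complex.exp (-(2 * Real.pi * Complex.I) / q1) ^ (M * k))) :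
    ∀ (x : ℤ → ℝ) (n : ℤ),
      downSample M (conv gh (upSample q2 x)) n -
          downSample q1 (conv p (upSample q2 (downSample M (conv gl (upSample q1 x))))) n
        = downSample M (conv ghnew (upSample q2 x)) n := by
  intro x n
  have hq1 : q1 ≠ 0 := by omega
  have hq2 : q2 ≠ 0 := by omega
  have hM0 : M ≠ 0 := by omega
  have hζ : IsPrimitiveRoot (Complex.exp (-(2 * Real.pi * Complex.I) / q1)) q1 := by
    rw [neg_div, Complex.exp_neg]
    exact (Complex.isPrimitiveRoot_exp q1 hq1).inv
  have hc := finite_support_predictCorrection (q2 := q2) (M := M) hq1 hgl hp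
  have hnew : ghnew = gh - predictCorrection q1 q2 M gl p :=
    eq_of_lev_eq hghnew ((hgh.union hc).subset (support_sub _ _)) fun z hz => by
      obtain ⟨w, rfl⟩ := IsAlgClosed.exists_pow_nat_eq z (Nat.pos_of_ne_zero hq1)
      have hw : w ≠ 0 := by rintro rfl; exact hz (zero_pow hq1)
      rw [hformula w hw, lev_sub hgh hc, lev_predictCorrection hq1 hq2 hM0 hζ hgl hp hw]
  rw [predict_branch_eq_conv_predictCorrection hq1 hq2 hM0 hcop hgl hp, hnew, sub_conv hgh hc]
  rfl
end

section
/- Two downsamplers commute with upsamplers when coprime: for sequences x : ℤ → ℝ and positive integers p, q with gcd(p,q) = 1, applying a q-fold upsampler followed by a p-fold downsampler yields the same result as applying the p-fold downsampler followed by the q-fold upsampler: (↓p ∘ ↑q)(x) = (↑q ∘ ↓p)(x). -/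
/-! Since `q` is coprime to `p`, `q ∣ p n ↔ q ∣ n`: both sides vanish off the multiples of `q`,
and at `n = q k` both equal `x (p k)`. -/

theorem IsCoprime.dvd_mul_left_iff {R : Type*} [CommSemiring R] {x y z : R} (h : IsCoprime x y) :
    x ∣ y * z ↔ x ∣ z :=
  ⟨h.dvd_of_dvd_mul_left, fun hz => hz.mul_left y⟩

theorem upSample_natCast_mul_apply {p q : ℕ} (hcop : IsCoprime (q : ℤ) p) (x : ℤ → ℝ) (n : ℤ) :
    upSample q x (p * n) = if (q : ℤ) ∣ n then x (p * (n / q)) else 0 := by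
  simp only [upSample, hcop.dvd_mul_left_iff]
  split_ifs with hn
  · rw [Int.mul_ediv_assoc _ hn]
  · rfl

theorem downsample_upsample_swap_general (p q : ℕ)
    (hcop : Nat.gcd p q = 1) (x : ℤ → ℝ) :
    downSample p (upSample q x) = upSample q (downSample p x) := by
  have hcop' : IsCoprime (q : ℤ) p := Nat.isCoprime_iff_coprime.mpr (Nat.coprime_comm.mp hcop)
  funext n
  exact upSample_natCast_mul_apply hcop' x n

/-- Coprime sampler swap: for `gcd(p, q) = 1`, a `q`-fold upsampler followed by
a `p`-fold downsampler yields the same result as the `p`-fold downsampler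
followed by the `q`-fold upsampler: `(↓p ∘ ↑q)(x) = (↑q ∘ ↓p)(x)`. -/
theorem downsample_upsample_swap (p q : ℕ) (hp : 1 ≤ p) (hq : 1 ≤ q)
    (hcop : Nat.gcd p q = 1) (x : ℤ → ℝ) :
    downSample p (upSample q x) = upSample q (downSample p x) :=
  downsample_upsample_swap_general p q hcop x
end
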